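/- arXiv:1707.02823 — 6 statements merged into one kernel-verified Lean document; each statement's English description precedes it below -/
import Mathlib

section
/- The group presented as ⟨m, c ∣ m·c·m = c·m⁻¹·c⟩ is isomorphic to the braid group presentation of the trefoil knot group ⟨a, b ∣ a·b·a = b·a·b⟩. -/
/-- Relators for the presentation ⟨m, c ∣ m·c·m = c·m⁻¹·c⟩ of the trefoil
knot group (generator `0` is `m`, generator `1` is `c`). -/
def trefoilRels : Set (FreeGroup (Fin 2)) :=
  {FreeGroup.of 0 * FreeGroup.of 1 * FreeGroup.of 0 *
    (FreeGroup.of 1)⁻¹ * FreeGroup.of 0 * (FreeGroup.of 1)⁻¹}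

/-- Relators for the braid presentation ⟨a, b ∣ a·b·a = b·a·b⟩
(generator `0` is `a`, generator `1` is `b`). -/
def braidRels : Set (FreeGroup (Fin 2)) :=
  {FreeGroup.of 0 * FreeGroup.of 1 * FreeGroup.of 0 *
    (FreeGroup.of 1)⁻¹ * (FreeGroup.of 0)⁻¹ * (FreeGroup.of 1)⁻¹}

/-! The substitutions `m = b, c = aba` and `a = c⁻¹mc, b = m` are mutually inverse and carry
each relation to the other, because in the braid group `aba` conjugates `b` to `a`, and in
the trefoil group `c⁻¹mc · m · c⁻¹mc = c`. -/

section GroupIdentities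

variable {G : Type*} [Group G]

theorem trefoil_rel_of_braid_rel {a b : G} (h : a * b * a = b * a * b) :
    b * (a * b * a) * b = (a * b * a) * b⁻¹ * (a * b * a) :=
  calc b * (a * b * a) * b = (b * a * b) * (a * b) := by group
    _ = (a * b * a) * (a * b) := by rw [← h]
    _ = (a * b * a) * b⁻¹ * (b * a * b) := by group
    _ = (a * b * a) * b⁻¹ * (a * b * a) := by rw [← h]

theorem inv_mul_mul_eq_of_braid_rel {a b : G} (h : a * b * a = b * a * b) :
    (a * b * a)⁻¹ * b * (a * b * a) = a :=
  calc (a * b * a)⁻¹ * b * (a * b * a) = (a * b * a)⁻¹ * ((b * a * b) * a) := by group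
    _ = a := by rw [← h]; group

theorem conj_mul_conj_eq_of_trefoil_rel {m c : G} (h : m * c * m = c * m⁻¹ * c) :
    (c⁻¹ * m * c) * m * (c⁻¹ * m * c) = c :=
  calc (c⁻¹ * m * c) * m * (c⁻¹ * m * c) = c⁻¹ * (m * c * m) * c⁻¹ * (m * c) := by group
    _ = c := by rw [h]; group

theorem mul_conj_mul_eq_of_trefoil_rel {m c : G} (h : m * c * m = c * m⁻¹ * c) :
    m * (c⁻¹ * m * c) * m = c :=
  calc m * (c⁻¹ * m * c) * m = m * c⁻¹ * (m * c * m) := by group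
    _ = c := by rw [h]; group

theorem braid_rel_of_trefoil_rel {m c : G} (h : m * c * m = c * m⁻¹ * c) :
    (c⁻¹ * m * c) * m * (c⁻¹ * m * c) = m * (c⁻¹ * m * c) * m := by
  rw [conj_mul_conj_eq_of_trefoil_rel h, mul_conj_mul_eq_of_trefoil_rel h]

theorem forall_trefoilRels_lift_eq_one_iff (f : Fin 2 → G) :
    (∀ r ∈ trefoilRels, FreeGroup.lift f r = 1) ↔ f 0 * f 1 * f 0 = f 1 * (f 0)⁻¹ * f 1 := by
  rw [← mul_inv_eq_one]
  simp only [trefoilRels, Set.mem_singleton_iff, forall_eq, map_mul, map_inv,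
    FreeGroup.lift_apply_of]
  group

theorem forall_braidRels_lift_eq_one_iff (f : Fin 2 → G) :
    (∀ r ∈ braidRels, FreeGroup.lift f r = 1) ↔ f 0 * f 1 * f 0 = f 1 * f 0 * f 1 := by
  rw [← mul_inv_eq_one]
  simp only [braidRels, Set.mem_singleton_iff, forall_eq, map_mul, map_inv,
    FreeGroup.lift_apply_of]
  group

end GroupIdentities

open PresentedGroup

theorem lift_of_eq_one_of_mem_rels {α : Type*} {rels : Set (FreeGroup α)}
    {r : FreeGroup α} (hr : r ∈ rels) : FreeGroup.lift (of (rels := rels)) r = 1 := by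
  have : FreeGroup.lift (of (rels := rels)) = mk rels :=
    FreeGroup.ext_hom _ _ fun _ => rfl
  rw [this]
  exact one_of_mem hr

theorem trefoil_relation_holds :
    (.of 0 : PresentedGroup trefoilRels) * .of 1 * .of 0 = .of 1 * (.of 0)⁻¹ * .of 1 :=
  (forall_trefoilRels_lift_eq_one_iff _).1 fun _ => lift_of_eq_one_of_mem_rels

theorem braid_relation_holds :
    (.of 0 : PresentedGroup braidRels) * .of 1 * .of 0 = .of 1 * .of 0 * .of 1 :=
  (forall_braidRels_lift_eq_one_iff _).1 fun _ => lift_of_eq_one_of_mem_rels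

def trefoilToBraid : PresentedGroup trefoilRels →* PresentedGroup braidRels :=
  toGroup ((forall_trefoilRels_lift_eq_one_iff ![of 1, of 0 * of 1 * of 0]).2
    (trefoil_rel_of_braid_rel braid_relation_holds))

def braidToTrefoil : PresentedGroup braidRels →* PresentedGroup trefoilRels :=
  toGroup ((forall_braidRels_lift_eq_one_iff ![(of 1)⁻¹ * of 0 * of 1, of 0]).2
    (braid_rel_of_trefoil_rel trefoil_relation_holds))

def trefoilEquivBraid : PresentedGroup trefoilRels ≃* PresentedGroup braidRels :=
  MonoidHom.toMulEquiv trefoilToBraid braidToTrefoil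
    (ext <| Fin.forall_fin_two.2
      ⟨by simp [trefoilToBraid, braidToTrefoil],
        by simpa [trefoilToBraid, braidToTrefoil, mul_assoc] using
          conj_mul_conj_eq_of_trefoil_rel trefoil_relation_holds⟩)
    (ext <| Fin.forall_fin_two.2
      ⟨by simpa only [trefoilToBraid, braidToTrefoil, MonoidHom.comp_apply, MonoidHom.id_apply,
          toGroup.of, map_mul, map_inv, Matrix.cons_val_zero,
          Matrix.cons_val_one] using inv_mul_mul_eq_of_braid_rel braid_relation_holds,
        by simp [trefoilToBraid, braidToTrefoil]⟩)

theorem trefoil_banchoff_iso_braid :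
    Nonempty (PresentedGroup trefoilRels ≃* PresentedGroup braidRels) :=
  ⟨trefoilEquivBraid⟩
end

section
/- The group ⟨m, c ∣ m·c·m = c·m⁻¹·c⟩ is isomorphic to the torus-knot presentation ⟨x, y ∣ x² = y³⟩ of the trefoil knot group. -/
/-- Relators for the torus-knot presentation ⟨x, y ∣ x² = y³⟩
(`0` is `x`, `1` is `y`). -/
def torusRels : Set (FreeGroup (Fin 2)) :=
  {FreeGroup.of 0 ^ 2 * (FreeGroup.of 1 ^ 3)⁻¹}

/-! The substitution `x = c`, `y = c m⁻¹` (inverse: `m = y⁻¹ x`, `c = x`) turns the relation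
`m c m = c m⁻¹ c` into `x² = y³`, because `y³ = c m⁻¹ (c m⁻¹ c) m⁻¹` and `x² = c m⁻¹ (m c m) m⁻¹`. -/

theorem mul_mul_eq_mul_inv_mul_iff_sq_eq_pow_three {G : Type*} [Group G] (m c : G) :
    m * c * m = c * m⁻¹ * c ↔ c ^ 2 = (c * m⁻¹) ^ 3 := by
  have hsq : c ^ 2 = c * m⁻¹ * (m * c * m) * m⁻¹ := by rw [sq]; group
  have hcube : (c * m⁻¹) ^ 3 = c * m⁻¹ * (c * m⁻¹ * c) * m⁻¹ := by
    rw [pow_succ, sq]; group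
  rw [hsq, hcube, mul_left_inj, mul_right_inj]

namespace PresentedGroup

theorem lift_of_eq_one {α : Type*} {rels : Set (FreeGroup α)} {r : FreeGroup α}
    (hr : r ∈ rels) : FreeGroup.lift (of (rels := rels)) r = 1 := by
  rw [show FreeGroup.lift of = mk rels from FreeGroup.ext_hom _ _ fun _ => rfl]
  exact one_of_mem hr

end PresentedGroup

open PresentedGroup

section Relations

variable {G : Type*} [Group G] (f : Fin 2 → G)

theorem trefoilRels_lift_eq_one_iff :
    (∀ r ∈ trefoilRels, FreeGroup.lift f r = 1) ↔ f 0 * f 1 * f 0 = f 1 * (f 0)⁻¹ * f 1 := by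
  have hrel : FreeGroup.lift f (FreeGroup.of 0 * FreeGroup.of 1 * FreeGroup.of 0 *
      (FreeGroup.of 1)⁻¹ * FreeGroup.of 0 * (FreeGroup.of 1)⁻¹) =
      f 0 * f 1 * f 0 * (f 1 * (f 0)⁻¹ * f 1)⁻¹ := by
    simp only [map_mul, map_inv, FreeGroup.lift_apply_of]
    group
  simp only [trefoilRels, Set.mem_singleton_iff, forall_eq, hrel, mul_inv_eq_one]

theorem torusRels_lift_eq_one_iff :
    (∀ r ∈ torusRels, FreeGroup.lift f r = 1) ↔ f 0 ^ 2 = f 1 ^ 3 := by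
  simp only [torusRels, Set.mem_singleton_iff, forall_eq, map_mul, map_inv, map_pow,
    FreeGroup.lift_apply_of, mul_inv_eq_one]

end Relations

theorem trefoil_relation :
    (of 0 : PresentedGroup trefoilRels) * of 1 * of 0 = of 1 * (of 0)⁻¹ * of 1 :=
  (trefoilRels_lift_eq_one_iff of).1 fun _ => lift_of_eq_one

theorem torus_relation : (of 0 : PresentedGroup torusRels) ^ 2 = of 1 ^ 3 :=
  (torusRels_lift_eq_one_iff of).1 fun _ => lift_of_eq_one

def trefoilToTorus : PresentedGroup trefoilRels →* PresentedGroup torusRels :=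
  toGroup (f := ![(of 1)⁻¹ * of 0, of 0]) <| by
    rw [trefoilRels_lift_eq_one_iff]
    simp only [Matrix.cons_val_zero, Matrix.cons_val_one,
      mul_mul_eq_mul_inv_mul_iff_sq_eq_pow_three]
    rw [show (of 0 : PresentedGroup torusRels) * ((of 1)⁻¹ * of 0)⁻¹ = of 1 by group]
    exact torus_relation

def torusToTrefoil : PresentedGroup torusRels →* PresentedGroup trefoilRels :=
  toGroup (f := ![of 1, of 1 * (of 0)⁻¹]) <| by
    rw [torusRels_lift_eq_one_iff]
    simp only [Matrix.cons_val_zero, Matrix.cons_val_one]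
    exact (mul_mul_eq_mul_inv_mul_iff_sq_eq_pow_three _ _).1 trefoil_relation

theorem torusToTrefoil_comp_trefoilToTorus :
    torusToTrefoil.comp trefoilToTorus = MonoidHom.id _ := by
  ext i
  fin_cases i <;> simp [trefoilToTorus, torusToTrefoil, toGroup.of]

theorem trefoilToTorus_comp_torusToTrefoil :
    trefoilToTorus.comp torusToTrefoil = MonoidHom.id _ := by
  ext i
  fin_cases i <;> simp [trefoilToTorus, torusToTrefoil, toGroup.of]

theorem trefoil_banchoff_iso_torus :
    Nonempty (PresentedGroup trefoilRels ≃* PresentedGroup torusRels) :=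
  ⟨MonoidHom.toMulEquiv trefoilToTorus torusToTrefoil
    torusToTrefoil_comp_trefoilToTorus trefoilToTorus_comp_torusToTrefoil⟩
end

section
/- The Sieradski group S(3) = ⟨g₁, g₂, g₃ ∣ g₁ = g₃·g₂, g₂ = g₁·g₃, g₃ = g₂·g₁⟩ is isomorphic to the quaternion group Q₈ of order 8. -/
/-- Relators for the Sieradski group S(n) = ⟨g₀,…,g_{n-1} ∣ gᵢ = gᵢ₋₁·gᵢ₊₁⟩,
indices mod n. -/
def sieradskiRels (n : ℕ) : Set (FreeGroup (ZMod n)) :=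
  {r | ∃ i : ZMod n,
    r = FreeGroup.of i * (FreeGroup.of (i - 1) * FreeGroup.of (i + 1))⁻¹}

/-- The Sieradski group S(n). -/
abbrev Sieradski (n : ℕ) := PresentedGroup (sieradskiRels n)

/-!
In `S(3)` the relation for `g₂` reads `g₂ = g₁ g₀`, so `S(3)` is generated by `x = g₀` and
`y = g₁` subject to `x y x = y` and `y x y = x`. These imply `x⁴ = 1`, `y² = x²` and
`y x y⁻¹ = x⁻¹`, the defining relations of `Q₈`; conversely `i, j ∈ Q₈` (`a 1` and `xa 0` in
`QuaternionGroup 2`) satisfy `x y x = y`, `y x y = x`. Hence `g₀ ↦ i`, `g₁ ↦ j` and `i ↦ g₀`,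
`j ↦ g₁` are mutually inverse homomorphisms.
-/

namespace ZMod

variable {G : Type*} {x : G} {m : ℕ}

theorem pow_val_natCast [Monoid G] (hx : x ^ m = 1) (k : ℕ) :
    x ^ (k : ZMod m).val = x ^ k := by
  rw [val_natCast, ← pow_eq_pow_mod _ hx]

theorem pow_val_add [Monoid G] [NeZero m] (hx : x ^ m = 1) (i j : ZMod m) :
    x ^ (i + j).val = x ^ i.val * x ^ j.val := by
  rw [val_add, ← pow_eq_pow_mod _ hx, pow_add]

theorem pow_val_neg [Group G] [NeZero m] (hx : x ^ m = 1) (i : ZMod m) :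
    x ^ (-i).val = (x ^ i.val)⁻¹ :=
  eq_inv_of_mul_eq_one_left <| by
    rw [← pow_val_add hx, neg_add_cancel, val_zero, pow_zero]

end ZMod

section

variable {G : Type*} [Group G] {x y : G}

theorem conj_eq_inv_of_mul_mul_eq (h : x * y * x = y) : y * x * y⁻¹ = x⁻¹ :=
  calc y * x * y⁻¹ = x⁻¹ * (x * y * x) * y⁻¹ := by group
    _ = x⁻¹ := by rw [h]; group

theorem sq_eq_sq_of_mul_mul_eq (h₁ : x * y * x = y) (h₂ : y * x * y = x) : y ^ 2 = x ^ 2 :=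
  calc y ^ 2 = x * (x⁻¹ * y * y) := by rw [sq]; group
    _ = x * (x⁻¹ * (x * y * x) * y) := by rw [h₁]
    _ = x * (y * x * y) := by group
    _ = x ^ 2 := by rw [h₂, sq]

theorem pow_four_eq_one_of_mul_mul_eq (h₁ : x * y * x = y) (h₂ : y * x * y = x) : x ^ 4 = 1 :=
  calc x ^ 4 = x * x * y ^ 2 := by rw [sq_eq_sq_of_mul_mul_eq h₁ h₂]; group
    _ = x * y⁻¹ * (y * x * y) * y := by rw [sq]; group
    _ = x * y⁻¹ * (x * y * x) * x⁻¹ := by rw [h₂]; group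
    _ = 1 := by rw [h₁]; group

end

namespace QuaternionGroup

variable {n : ℕ} [NeZero n] {G : Type*} [Group G]

theorem hom_ext {f g : QuaternionGroup n →* G} (ha : f (a 1) = g (a 1))
    (hxa : f (xa 0) = g (xa 0)) : f = g := by
  have ha_pow (i : ZMod (2 * n)) : a i = (a 1 : QuaternionGroup n) ^ i.val := by
    rw [a_one_pow, ZMod.natCast_zmod_val]
  have hxa_mul (i : ZMod (2 * n)) : xa i = (xa 0 : QuaternionGroup n) * a i := by
    rw [xa_mul_a, zero_add]
  ext (i | i)
  · rw [ha_pow, map_pow, map_pow, ha]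
  · rw [hxa_mul, map_mul, map_mul, hxa, ha_pow, map_pow, map_pow, ha]

def lift (x y : G) (hx : x ^ (2 * n) = 1) (hy : y ^ 2 = x ^ n) (hyx : y * x * y⁻¹ = x⁻¹) :
    QuaternionGroup n →* G where
  toFun
    | a i => x ^ i.val
    | xa i => y * x ^ i.val
  map_one' := by
    show x ^ (0 : ZMod (2 * n)).val = 1
    rw [ZMod.val_zero, pow_zero]
  map_mul' := by
    have hcomm (k : ℕ) : x ^ k * y = y * (x ^ k)⁻¹ := by
      have hconj : y * x ^ k * y⁻¹ = (x ^ k)⁻¹ := by rw [← conj_pow, hyx, inv_pow]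
      calc x ^ k * y = (y * x ^ k * y⁻¹)⁻¹ * y := by rw [hconj, inv_inv]
        _ = y * (x ^ k)⁻¹ := by group
    rintro (i | i) (j | j)
    · simp only [a_mul_a, ZMod.pow_val_add hx]
    · simp only [a_mul_xa, sub_eq_neg_add, ZMod.pow_val_add hx, ZMod.pow_val_neg hx]
      rw [← mul_assoc, ← hcomm, mul_assoc]
    · simp only [xa_mul_a, ZMod.pow_val_add hx, mul_assoc]
    · have hexp : (n : ZMod (2 * n)) + j - i = n + (-i + j) := by ring
      simp only [xa_mul_xa, hexp, ZMod.pow_val_add hx, ZMod.pow_val_neg hx,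
        ZMod.pow_val_natCast hx]
      rw [← hy, mul_assoc, ← mul_assoc _ y, hcomm, sq]
      group

@[simp]
theorem lift_a_one (x y : G) (hx : x ^ (2 * n) = 1) (hy : y ^ 2 = x ^ n)
    (hyx : y * x * y⁻¹ = x⁻¹) : lift x y hx hy hyx (a 1) = x := by
  show x ^ (1 : ZMod (2 * n)).val = x
  simpa using ZMod.pow_val_natCast hx 1

@[simp]
theorem lift_xa_zero (x y : G) (hx : x ^ (2 * n) = 1) (hy : y ^ 2 = x ^ n)
    (hyx : y * x * y⁻¹ = x⁻¹) : lift x y hx hy hyx (xa 0) = y := by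
  show y * x ^ (0 : ZMod (2 * n)).val = y
  rw [ZMod.val_zero, pow_zero, mul_one]

end QuaternionGroup

namespace Sieradski

open PresentedGroup

theorem of_eq_of_sub_one_mul_of_add_one {n : ℕ} (i : ZMod n) :
    (of i : Sieradski n) = of (i - 1) * of (i + 1) := by
  have h := one_of_mem (rels := sieradskiRels n) ⟨i, rfl⟩
  rwa [map_mul, map_inv, mul_inv_eq_one] at h

theorem three_of_two : (of 2 : Sieradski 3) = of 1 * of 0 :=
  of_eq_of_sub_one_mul_of_add_one 2

theorem three_of_zero_mul_of_one_mul_of_zero : (of 0 * of 1 * of 0 : Sieradski 3) = of 1 := by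
  rw [mul_assoc, ← three_of_two]
  exact (of_eq_of_sub_one_mul_of_add_one 1).symm

theorem three_of_one_mul_of_zero_mul_of_one : (of 1 * of 0 * of 1 : Sieradski 3) = of 0 := by
  rw [← three_of_two]
  exact (of_eq_of_sub_one_mul_of_add_one 0).symm

variable {G : Type*} [Group G]

theorem three_hom_ext {f g : Sieradski 3 →* G} (h₀ : f (of 0) = g (of 0))
    (h₁ : f (of 1) = g (of 1)) : f = g := by
  refine PresentedGroup.ext fun i => ?_
  fin_cases i
  · exact h₀
  · exact h₁
  · show f (of 2) = g (of 2)
    rw [three_of_two, map_mul, map_mul, h₀, h₁]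

def liftThree (x y : G) (h₁ : x * y * x = y) (h₂ : y * x * y = x) : Sieradski 3 →* G :=
  toGroup (f := fun i : ZMod 3 => ![x, y, y * x] i) <| by
    rintro _ ⟨i, rfl⟩
    simp only [map_mul, map_inv, FreeGroup.lift_apply_of, mul_inv_eq_one]
    fin_cases i
    · exact h₂.symm
    · show y = x * (y * x)
      rw [← mul_assoc, h₁]
    · rfl

@[simp]
theorem liftThree_of_zero (x y : G) (h₁ : x * y * x = y) (h₂ : y * x * y = x) :
    liftThree x y h₁ h₂ (of 0) = x :=
  toGroup.of _

@[simp]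
theorem liftThree_of_one (x y : G) (h₁ : x * y * x = y) (h₂ : y * x * y = x) :
    liftThree x y h₁ h₂ (of 1) = y :=
  toGroup.of _

end Sieradski

open QuaternionGroup Sieradski PresentedGroup in
/-- S(3) is isomorphic to the quaternion group Q₈ (= QuaternionGroup 2). -/
theorem sieradski_three_iso_quaternion :
    Nonempty (Sieradski 3 ≃* QuaternionGroup 2) := by
  have hA : (of 0 : Sieradski 3) * of 1 * of 0 = of 1 := three_of_zero_mul_of_one_mul_of_zero
  have hB : (of 1 : Sieradski 3) * of 0 * of 1 = of 0 := three_of_one_mul_of_zero_mul_of_one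
  let φ := liftThree (a 1 : QuaternionGroup 2) (xa 0) (by decide) (by decide)
  let ψ : QuaternionGroup 2 →* Sieradski 3 := lift (of 0) (of 1)
    (pow_four_eq_one_of_mul_mul_eq hA hB) (sq_eq_sq_of_mul_mul_eq hA hB)
    (conj_eq_inv_of_mul_mul_eq hA)
  exact ⟨φ.toMulEquiv ψ (three_hom_ext (by simp [φ, ψ]) (by simp [φ, ψ]))
    (QuaternionGroup.hom_ext (by simp [φ, ψ]) (by simp [φ, ψ]))⟩
end

section
/- The Sieradski group S(4) = ⟨g₁, g₂, g₃, g₄ ∣ g₁ = g₄·g₂, g₂ = g₁·g₃, g₃ = g₂·g₄, g₄ = g₃·g₁⟩ is isomorphic to SL₂(ℤ/3). -/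
/-!
In S(4) the generators a = g₀ and b = g₁ suffice (g₂ = a⁻¹b, g₃ = a⁻¹ba) and satisfy aba = b²
and bab = a². These two relations alone bound the group: z = a³ = b³ is central, and i = ba,
j = ab satisfy i² = j² = (ij)² = z because ij = a j a⁻¹, which forces z² = 1 as in the quaternion
group. So a⁶ = 1, and left multiplication by a and b permutes the cosets of 1, b, ab, a²b modulo
⟨a⟩, whence every element is one of the 24 words t·aᵏ. Sending g₀, …, g₃ to suitable matrices
respects the relations and maps these 24 words onto the 24 distinct elements of SL₂(𝔽₃).
-/

open Function Subgroup
open scoped MatrixGroups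

open scoped Pointwise in
theorem MulAction.smul_mem_of_closure_eq_top {G α : Type*} [Group G] [MulAction G α] {S : Set G}
    (hS : closure S = ⊤) {Y : Set α} (hY : Y.Finite) (hSY : ∀ s ∈ S, ∀ y ∈ Y, s • y ∈ Y)
    (g : G) {y : α} (hy : y ∈ Y) : g • y ∈ Y := by
  have hg : g ∈ stabilizer G Y :=
    (closure_le _).2 (fun s hs ↦ (mem_stabilizer_set' hY).2 (hSY s hs)) (hS ▸ mem_top g)
  exact (mem_stabilizer_set' hY).1 hg hy

theorem exists_pow_eq_of_mem_zpowers {G : Type*} [Group G] {a y : G} {n : ℕ} (hn : 0 < n)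
    (ha : a ^ n = 1) (hy : y ∈ zpowers a) : ∃ k : Fin n, a ^ (k : ℕ) = y := by
  classical
  obtain ⟨k, hk, rfl⟩ := Finset.mem_image.1
    ((isOfFinOrder_iff_pow_eq_one.2 ⟨n, hn, ha⟩).mem_zpowers_iff_mem_range_orderOf.1 hy)
  exact ⟨⟨k, (Finset.mem_range.1 hk).trans_le (orderOf_le_of_pow_eq_one hn ha)⟩, rfl⟩

theorem pow_four_eq_one_of_sq_eq_sq_of_mul_sq_eq {G : Type*} [Group G] {i j : G}
    (hij : i ^ 2 = j ^ 2) (h : (i * j) ^ 2 = i ^ 2) : i ^ 4 = 1 := by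
  have hiji : i * j * i = j :=
    mul_right_cancel (b := j) (by simpa only [sq, mul_assoc] using h.trans hij)
  have hjij : j * i * j = i :=
    mul_left_cancel (a := i) (by simpa only [sq, mul_assoc] using h)
  calc i ^ 4 = i * j ^ 2 * i := by
        rw [← hij]; simp only [pow_succ, pow_zero, one_mul, mul_assoc]
    _ = i * j * (j * i) := by simp only [sq, mul_assoc]
    _ = j * i⁻¹ * (i * j⁻¹) := by
      rw [eq_mul_inv_of_mul_eq hiji, eq_mul_inv_of_mul_eq hjij]
    _ = 1 := by group

namespace BinaryTetrahedral

variable {G : Type*} [Group G] {a b : G}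

theorem pow_three_eq (hab : a * b * a = b ^ 2) (hba : b * a * b = a ^ 2) : a ^ 3 = b ^ 3 :=
  calc a ^ 3 = a * (b * a * b) := by rw [hba, pow_succ']
    _ = a * b * a * b := by simp only [mul_assoc]
    _ = b ^ 3 := by rw [hab, ← pow_succ]

theorem commute_pow_three (hab : a * b * a = b ^ 2) (hba : b * a * b = a ^ 2) :
    Commute (a ^ 3) b := by
  rw [pow_three_eq hab hba]
  exact (Commute.refl b).pow_left 3

theorem mul_sq_mul (hab : a * b * a = b ^ 2) (hba : b * a * b = a ^ 2) :
    b * a ^ 2 * b = a ^ 2 * b * a⁻¹ :=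
  calc b * a ^ 2 * b = b * a * (a * b * a) * a⁻¹ := by rw [sq]; group
    _ = b * a * b * b * a⁻¹ := by rw [hab, sq]; simp only [mul_assoc]
    _ = a ^ 2 * b * a⁻¹ := by rw [hba]

theorem pow_six_eq_one (hab : a * b * a = b ^ 2) (hba : b * a * b = a ^ 2) : a ^ 6 = 1 := by
  have hi : (b * a) ^ 2 = b ^ 3 :=
    calc (b * a) ^ 2 = b * (a * b * a) := by simp only [sq, mul_assoc]
      _ = b ^ 3 := by rw [hab, pow_succ' b 2]
  have hj : (a * b) ^ 2 = b ^ 3 :=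
    calc (a * b) ^ 2 = a * b * a * b := by simp only [sq, mul_assoc]
      _ = b ^ 3 := by rw [hab, ← pow_succ]
  -- (ba)(ab) is the conjugate a (ab) a⁻¹, and (ab)² = b³ = a³ commutes with a
  have hij : (b * a * (a * b)) ^ 2 = (b * a) ^ 2 :=
    calc (b * a * (a * b)) ^ 2 = (a * (a * b) * a⁻¹) ^ 2 := by
          congr 1; simpa only [sq, mul_assoc] using mul_sq_mul hab hba
      _ = a * (a * b) ^ 2 * a⁻¹ := by simp only [sq, mul_assoc, inv_mul_cancel_left]
      _ = (b * a) ^ 2 := by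
          rw [hj, hi, ← pow_three_eq hab hba, ← pow_succ', mul_inv_eq_iff_eq_mul, ← pow_succ]
  have h4 := pow_four_eq_one_of_sq_eq_sq_of_mul_sq_eq (hi.trans hj.symm) hij
  calc a ^ 6 = (b ^ 3) ^ 2 := by rw [← pow_three_eq hab hba, ← pow_mul]
    _ = 1 := by rw [← hi, ← pow_mul, h4]

def cosetRep (a b : G) : Fin 4 → G := ![1, b, a * b, a ^ 2 * b]

def cosetWord (a b : G) (p : Fin 4 × Fin 6) : G := cosetRep a b p.1 * a ^ (p.2 : ℕ)

theorem exists_mul_cosetRep_eq (hab : a * b * a = b ^ 2) (hba : b * a * b = a ^ 2) {s : G}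
    (hs : s = a ∨ s = b) (i : Fin 4) :
    ∃ j, ∃ k : ℤ, s * cosetRep a b i = cosetRep a b j * a ^ k := by
  rcases hs with rfl | rfl <;> fin_cases i
  · exact ⟨0, 1, by simp [cosetRep]⟩
  · exact ⟨2, 0, by simp [cosetRep]⟩
  · exact ⟨3, 0, by simp [cosetRep, sq, mul_assoc]⟩
  · exact ⟨1, 3, by simp [cosetRep, ← mul_assoc, ← pow_succ', (commute_pow_three hab hba).eq]⟩
  · exact ⟨1, 0, by simp [cosetRep]⟩
  · exact ⟨2, 1, by simp [cosetRep, ← sq, ← hab]⟩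
  · exact ⟨0, 2, by simp [cosetRep, ← mul_assoc, hba]⟩
  · exact ⟨3, -1, by simp [cosetRep, ← mul_assoc, mul_sq_mul hab hba]⟩

theorem cosetWord_surjective (hgen : closure {a, b} = ⊤) (hab : a * b * a = b ^ 2)
    (hba : b * a * b = a ^ 2) : Surjective (cosetWord a b) := by
  let π : G → G ⧸ zpowers a := QuotientGroup.mk
  have hstep : ∀ s ∈ ({a, b} : Set G), ∀ y ∈ Set.range (π ∘ cosetRep a b),
      s • y ∈ Set.range (π ∘ cosetRep a b) := by
    rintro s hs _ ⟨i, rfl⟩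
    obtain ⟨j, k, hjk⟩ := exists_mul_cosetRep_eq hab hba hs i
    exact ⟨j, by simp [π, hjk, QuotientGroup.mk_mul_of_mem _ (zpow_mem_zpowers a k)]⟩
  have hcosets (g : G) : π g ∈ Set.range (π ∘ cosetRep a b) := by
    simpa [π] using MulAction.smul_mem_of_closure_eq_top hgen (Set.finite_range _) hstep g
      (⟨0, rfl⟩ : π 1 ∈ Set.range (π ∘ cosetRep a b))
  intro g
  obtain ⟨i, hi⟩ := hcosets g
  obtain ⟨k, hk⟩ := exists_pow_eq_of_mem_zpowers (by norm_num) (pow_six_eq_one hab hba)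
    (QuotientGroup.eq.1 hi)
  exact ⟨(i, k), by simp [cosetWord, hk]⟩

theorem map_cosetWord {H : Type*} [Group H] (f : G →* H) (p : Fin 4 × Fin 6) :
    f (cosetWord a b p) = cosetWord (f a) (f b) p := by
  obtain ⟨i, k⟩ := p
  fin_cases i <;> simp [cosetWord, cosetRep]

end BinaryTetrahedral

namespace Sieradski

open PresentedGroup

theorem of_eq_mul (n : ℕ) (i : ZMod n) :
    (of i : Sieradski n) = of (i - 1) * of (i + 1) := by
  have h : PresentedGroup.mk (sieradskiRels n)
      (FreeGroup.of i * (FreeGroup.of (i - 1) * FreeGroup.of (i + 1))⁻¹) = 1 :=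
    (QuotientGroup.eq_one_iff _).2 (subset_normalClosure ⟨i, rfl⟩)
  rwa [map_mul, map_inv, mul_inv_eq_one, map_mul] at h

theorem closure_of_zero_one (n : ℕ) [NeZero n] :
    closure {of 0, of 1} = (⊤ : Subgroup (Sieradski n)) := by
  set K := closure {(of 0 : Sieradski n), of 1}
  have hK (k : ℕ) : of (k : ZMod n) ∈ K ∧ of ((k : ZMod n) + 1) ∈ K := by
    induction k with
    | zero => simpa using ⟨Subgroup.subset_closure (by simp), Subgroup.subset_closure (by simp)⟩
    | succ k ih =>
      have h := of_eq_mul n ((k : ZMod n) + 1)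
      rw [add_sub_cancel_right, eq_comm, ← eq_inv_mul_iff_mul_eq] at h
      push_cast
      exact ⟨ih.2, h ▸ mul_mem (inv_mem ih.1) ih.2⟩
  rw [eq_top_iff, ← closure_range_of, closure_le]
  rintro _ ⟨i, rfl⟩
  simpa using (hK i.val).1

theorem of_zero_mul_of_one_mul_of_zero :
    (of 0 * of 1 * of 0 : Sieradski 4) = of 1 ^ 2 := by
  have r0 : (of 0 : Sieradski 4) = of 3 * of 1 := of_eq_mul 4 0
  have r1 : (of 1 : Sieradski 4) = of 0 * of 2 := of_eq_mul 4 1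
  have r2 : (of 2 : Sieradski 4) = of 1 * of 3 := of_eq_mul 4 2
  have h0 : (of 0 : Sieradski 4) = of 1 * (of 2)⁻¹ := by rw [r1]; group
  calc (of 0 * of 1 * of 0 : Sieradski 4) = of 1 * (of 2)⁻¹ * of 1 * (of 3 * of 1) := by
        rw [← h0, ← r0]
    _ = of 1 * (of 2)⁻¹ * (of 1 * of 3) * of 1 := by group
    _ = of 1 ^ 2 := by rw [← r2, sq]; group

theorem of_one_mul_of_zero_mul_of_one :
    (of 1 * of 0 * of 1 : Sieradski 4) = of 0 ^ 2 := by
  have r0 : (of 0 : Sieradski 4) = of 3 * of 1 := of_eq_mul 4 0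
  have r1 : (of 1 : Sieradski 4) = of 0 * of 2 := of_eq_mul 4 1
  have r3 : (of 3 : Sieradski 4) = of 2 * of 0 := of_eq_mul 4 3
  have h2 : (of 2 : Sieradski 4) = (of 0)⁻¹ * of 1 := by rw [r1]; group
  calc (of 1 * of 0 * of 1 : Sieradski 4) = of 0 * (of 3 * of 1) := by rw [r3, h2]; group
    _ = of 0 ^ 2 := by rw [← r0, sq]

def matrixGen : ZMod 4 → SL(2, ZMod 3) :=
  ![⟨!![0, 1; 2, 1], by decide⟩, ⟨!![0, 2; 1, 1], by decide⟩,
    ⟨!![2, 1; 0, 2], by decide⟩, ⟨!![2, 0; 1, 2], by decide⟩]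

theorem lift_matrixGen_eq_one : ∀ r ∈ sieradskiRels 4, FreeGroup.lift matrixGen r = 1 := by
  rintro _ ⟨i, rfl⟩
  simp only [map_mul, map_inv, FreeGroup.lift_apply_of, mul_inv_eq_one]
  revert i
  decide

def toSL23 : Sieradski 4 →* SL(2, ZMod 3) := toGroup lift_matrixGen_eq_one

theorem cosetWord_matrixGen_bijective :
    Bijective (BinaryTetrahedral.cosetWord (matrixGen 0) (matrixGen 1)) := by
  decide

end Sieradski

/-- S(4) is isomorphic to SL₂(ℤ/3). -/
theorem sieradski_four_iso_SL2_Z3 :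
    Nonempty (Sieradski 4 ≃* Matrix.SpecialLinearGroup (Fin 2) (ZMod 3)) := by
  open BinaryTetrahedral PresentedGroup Sieradski in
  have hcomp : toSL23 ∘ cosetWord (of 0) (of 1) = cosetWord (matrixGen 0) (matrixGen 1) :=
    funext fun p ↦ by simp [toSL23, map_cosetWord]
  have hbij : Bijective (toSL23 ∘ cosetWord (of 0) (of 1)) :=
    hcomp ▸ cosetWord_matrixGen_bijective
  have hsurj : Surjective (cosetWord (of 0 : Sieradski 4) (of 1)) :=
    cosetWord_surjective (closure_of_zero_one 4) of_zero_mul_of_one_mul_of_zero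
      of_one_mul_of_zero_mul_of_one
  exact ⟨MulEquiv.ofBijective toSL23 ((Bijective.of_comp_iff _ ⟨hbij.1.of_comp, hsurj⟩).1 hbij)⟩
end

section
/- The abelianization of the Sieradski group S(6) = ⟨g₁,…,g₆ ∣ gᵢ = gᵢ₋₁·gᵢ₊₁, indices mod 6⟩ is infinite; in particular S(6) is an infinite group. -/
/-!
Abelianizing the relation gᵢ = gᵢ₋₁ gᵢ₊₁ gives the linear recursion wᵢ₊₁ = wᵢ - wᵢ₋₁, whose
solutions are 6-periodic. Hence, whenever 6 ∣ n, the weights 1, 1, 0, -1, -1, 0 (repeated around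
the cycle) define a homomorphism S(n) → ℤ, onto since g₀ has weight 1. It factors through the
abelianization, so both groups surject onto ℤ.
-/

theorem Abelianization.infinite_of_surjective {G A : Type*} [Group G] [CommGroup A] [Infinite A]
    {f : G →* A} (hf : Function.Surjective f) : Infinite (Abelianization G) :=
  .of_surjective (Abelianization.lift f) fun a ↦
    let ⟨g, hg⟩ := hf a
    ⟨Abelianization.of g, hg⟩

theorem Infinite.of_infinite_abelianization {G : Type*} [Group G] [Infinite (Abelianization G)] :
    Infinite G :=
  .of_surjective Abelianization.of QuotientGroup.mk_surjective

namespace Sieradski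

def weight : ZMod 6 → ℤ := ![1, 1, 0, -1, -1, 0]

theorem weight_eq_add (i : ZMod 6) : weight i = weight (i - 1) + weight (i + 1) := by
  revert i
  decide

variable {n : ℕ} (hn : 6 ∣ n)

def toInt : Sieradski n →* Multiplicative ℤ :=
  PresentedGroup.toGroup (f := fun i ↦ .ofAdd (weight (ZMod.castHom hn (ZMod 6) i))) <| by
    rintro r ⟨i, rfl⟩
    simp only [map_mul, map_inv, FreeGroup.lift_apply_of, mul_inv_eq_one, map_sub, map_add,
      map_one, ← ofAdd_add, ← weight_eq_add]

theorem toInt_of_zero : toInt hn (PresentedGroup.of 0) = .ofAdd 1 := by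
  simp [toInt, PresentedGroup.toGroup.of, weight]

theorem toInt_surjective : Function.Surjective (toInt hn) := fun z ↦
  ⟨PresentedGroup.of 0 ^ z.toAdd, by
    rw [map_zpow, toInt_of_zero, ← ofAdd_zsmul, smul_eq_mul, mul_one, ofAdd_toAdd]⟩

end Sieradski

/-- The abelianization of S(6) is infinite; in particular S(6) is infinite. -/
theorem sieradski_six_infinite :
    Infinite (Abelianization (Sieradski 6)) ∧ Infinite (Sieradski 6) := by
  have := Abelianization.infinite_of_surjective (Sieradski.toInt_surjective (dvd_refl 6))
  exact ⟨this, Infinite.of_infinite_abelianization⟩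
end

section
/- The assignment m ↦ (1 2 3 4), c ↦ (1 2) defines a group homomorphism from the trefoil group ⟨m, c ∣ m·c·m = c·m⁻¹·c⟩ to S₄ whose image acts transitively on {1,2,3,4} and is not cyclic. -/
open Equiv Equiv.Perm

lemma lift_trefoilRels_eq_one {G : Type*} [Group G] {m c : G}
    (h : m * c * m = c * m⁻¹ * c) : ∀ r ∈ trefoilRels, FreeGroup.lift ![m, c] r = 1 := by
  rintro r rfl
  simp only [map_mul, map_inv, FreeGroup.lift_apply_of, Matrix.cons_val_zero,
    Matrix.cons_val_one]
  rw [h]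
  group

lemma Subgroup.not_isCyclic_of_not_commute {G : Type*} [Group G] {H : Subgroup G} {a b : G}
    (ha : a ∈ H) (hb : b ∈ H) (hab : ¬Commute a b) : ¬IsCyclic H :=
  fun _ => hab (setLike_mul_comm ha hb)

lemma exists_pow_finRotate_apply_eq (n : ℕ) (i j : Fin (n + 2)) :
    ∃ k : ℕ, (finRotate (n + 2) ^ k) i = j := by
  have moves (x : Fin (n + 2)) : finRotate (n + 2) x ≠ x :=
    mem_support.mp (support_finRotate ▸ Finset.mem_univ x)
  exact isCycle_finRotate.exists_pow_eq (moves i) (moves j)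

lemma Subgroup.exists_mem_apply_eq_of_finRotate_mem {n : ℕ} {H : Subgroup (Perm (Fin (n + 2)))}
    (hH : finRotate (n + 2) ∈ H) (i j : Fin (n + 2)) : ∃ g ∈ H, g i = j :=
  let ⟨k, hk⟩ := exists_pow_finRotate_apply_eq n i j
  ⟨_, H.pow_mem hH k, hk⟩

lemma finRotate_four_mul_swap_mul_finRotate_four :
    finRotate 4 * swap 0 1 * finRotate 4 = swap 0 1 * (finRotate 4)⁻¹ * swap 0 1 := by
  decide

lemma not_commute_finRotate_four_swap : ¬Commute (finRotate 4) (swap (0 : Fin 4) 1) := by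
  unfold Commute SemiconjBy
  decide

/-- `m ↦ (1 2 3 4)`, `c ↦ (1 2)` defines a homomorphism of the trefoil group
to S₄ whose image is transitive and not cyclic. -/
theorem trefoil_locally_cyclic_monodromy :
    ∃ φ : PresentedGroup trefoilRels →* Equiv.Perm (Fin 4),
      φ (PresentedGroup.of 0) = finRotate 4 ∧
      φ (PresentedGroup.of 1) = Equiv.swap 0 1 ∧
      (∀ i j : Fin 4, ∃ g ∈ φ.range, g i = j) ∧
      ¬ IsCyclic φ.range := by
  have hrels := lift_trefoilRels_eq_one finRotate_four_mul_swap_mul_finRotate_four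
  set φ := PresentedGroup.toGroup hrels
  have hm : φ (PresentedGroup.of 0) = finRotate 4 := PresentedGroup.toGroup.of hrels
  have hc : φ (PresentedGroup.of 1) = swap 0 1 := PresentedGroup.toGroup.of hrels
  have hm_mem : finRotate 4 ∈ φ.range := ⟨_, hm⟩
  have hc_mem : swap 0 1 ∈ φ.range := ⟨_, hc⟩
  exact ⟨φ, hm, hc, φ.range.exists_mem_apply_eq_of_finRotate_mem hm_mem,
    Subgroup.not_isCyclic_of_not_commute hm_mem hc_mem not_commute_finRotate_four_swap⟩
end
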